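/- Let f₀ ∈ L¹(ℝ³ₓ × ℝ³ᵥ) with (1+|ξ|+|η|)^α-weighted bounds on its Fourier transform as in the standing assumptions. Then the term Ŝ^{(1,2)}_{2,ε}(ξ,η) := -(2ε^{-1/2}/(2π)³) ∫ dh φ̂(εh) sin(ε h·η/2) f̂₀(ξ-h; η+(ξ-h)t₁) f̂₀(h; h t₁) satisfies |Ŝ^{(1,2)}_{2,ε}(ξ,η)| ≤ C√ε · sup_{ξ,η}((|ξ|+|η|)|f̂₀(ξ;η)|) · ∫ dξ sup_η((|ξ|+|η|)|f̂₀(ξ;η)|), with C depending only on ‖φ̂‖_∞ and t₁; in particular it tends to 0 as ε→0 pointwise in (ξ,η). -/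

import Mathlib

open MeasureTheory Filter Real

noncomputable section

abbrev Space3 := EuclideanSpace ℝ (Fin 3)

/-- The Fourier-side two-particle term
`Ŝ^{(1,2)}_{2,ε}(ξ,η) = -(2 ε^{-1/2}/(2π)³) ∫ φ̂(εh) sin(ε h·η/2)
f̂₀(ξ-h; η+(ξ-h)t₁) f̂₀(h; h t₁) dh`. -/
def Sterm (φhat : Space3 → ℝ) (fhat : Space3 × Space3 → ℂ) (t₁ : ℝ) (ε : ℝ)
    (ξ η : Space3) : ℂ :=
  (-(2 / Real.sqrt ε) / (2 * π) ^ 3 : ℝ) •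
    ∫ h : Space3,
      (φhat (ε • h) : ℂ) * (Real.sin (ε * (inner ℝ h η : ℝ) / 2) : ℝ) *
        fhat (ξ - h, η + t₁ • (ξ - h)) * fhat (h, t₁ • h)

/-! `|sin x| ≤ |x|` trades the prefactor `ε^{-1/2}` for `ε^{1/2} |h| |η|`.
The factor `|η|` is absorbed by the first `f̂₀`, whose weight `|ξ - h| + |η + t₁(ξ - h)|`
dominates `|η|` up to `max 1 |t₁|`, and `|h|` by the second, whose weight is integrable in `h`. -/

theorem norm_le_max_one_abs_mul_norm_add_norm_add_smul {E : Type*} [SeminormedAddCommGroup E]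
    [NormedSpace ℝ E] (t : ℝ) (x y : E) :
    ‖y‖ ≤ max 1 |t| * (‖x‖ + ‖y + t • x‖) := by
  have hy : ‖y‖ ≤ ‖y + t • x‖ + |t| * ‖x‖ := by
    calc ‖y‖ = ‖(y + t • x) - t • x‖ := by rw [add_sub_cancel_right]
      _ ≤ ‖y + t • x‖ + ‖t • x‖ := norm_sub_le _ _
      _ = ‖y + t • x‖ + |t| * ‖x‖ := by rw [norm_smul, Real.norm_eq_abs]
  have h1 : 1 ≤ max 1 |t| := le_max_left _ _
  have ht : |t| ≤ max 1 |t| := le_max_right _ _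
  nlinarith [norm_nonneg x, norm_nonneg (y + t • x)]

theorem abs_sin_mul_inner_div_two_le {E : Type*} [SeminormedAddCommGroup E]
    [InnerProductSpace ℝ E] (ε : ℝ) (x y : E) :
    |Real.sin (ε * inner ℝ x y / 2)| ≤ |ε| * ‖x‖ * ‖y‖ / 2 := by
  calc |Real.sin (ε * inner ℝ x y / 2)| ≤ |ε * inner ℝ x y / 2| := Real.abs_sin_le_abs
    _ = |ε| * |inner ℝ x y| / 2 := by rw [abs_div, abs_mul, abs_two]
    _ ≤ |ε| * (‖x‖ * ‖y‖) / 2 := by gcongr; exact abs_real_inner_le_norm x y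
    _ = |ε| * ‖x‖ * ‖y‖ / 2 := by ring

def Sintegrand (φhat : Space3 → ℝ) (fhat : Space3 × Space3 → ℂ) (t₁ ε : ℝ)
    (ξ η h : Space3) : ℂ :=
  (φhat (ε • h) : ℂ) * (Real.sin (ε * (inner ℝ h η : ℝ) / 2) : ℝ) *
    fhat (ξ - h, η + t₁ • (ξ - h)) * fhat (h, t₁ • h)

theorem Sterm_eq_smul_integral_Sintegrand (φhat : Space3 → ℝ) (fhat : Space3 × Space3 → ℂ)
    (t₁ ε : ℝ) (ξ η : Space3) :
    Sterm φhat fhat t₁ ε ξ η =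
      (-(2 / Real.sqrt ε) / (2 * π) ^ 3 : ℝ) • ∫ h, Sintegrand φhat fhat t₁ ε ξ η h :=
  rfl

section Bounds

variable {φhat : Space3 → ℝ} {Cφ : ℝ} {fhat : Space3 × Space3 → ℂ} {t₁ M : ℝ}
  {G : Space3 → ℝ}

theorem norm_Sintegrand_le (hφ : ∀ h, |φhat h| ≤ Cφ)
    (hM : ∀ ξ η : Space3, (‖ξ‖ + ‖η‖) * ‖fhat (ξ, η)‖ ≤ M)
    (hG : ∀ ξ η : Space3, (‖ξ‖ + ‖η‖) * ‖fhat (ξ, η)‖ ≤ G ξ)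
    {ε : ℝ} (hε : 0 ≤ ε) (ξ η h : Space3) :
    ‖Sintegrand φhat fhat t₁ ε ξ η h‖ ≤ ε / 2 * (Cφ * max 1 |t₁| * M) * G h := by
  set A := ‖fhat (ξ - h, η + t₁ • (ξ - h))‖
  set B := ‖fhat (h, t₁ • h)‖
  have hηA : ‖η‖ * A ≤ max 1 |t₁| * M := by
    calc ‖η‖ * A ≤ max 1 |t₁| * (‖ξ - h‖ + ‖η + t₁ • (ξ - h)‖) * A := by
          gcongr; exact norm_le_max_one_abs_mul_norm_add_norm_add_smul t₁ (ξ - h) η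
      _ = max 1 |t₁| * ((‖ξ - h‖ + ‖η + t₁ • (ξ - h)‖) * A) := by ring
      _ ≤ max 1 |t₁| * M := by gcongr; exact hM _ _
  have hhB : ‖h‖ * B ≤ G h :=
    calc ‖h‖ * B ≤ (‖h‖ + ‖t₁ • h‖) * B := by gcongr; exact le_add_of_nonneg_right (norm_nonneg _)
      _ ≤ G h := hG _ _
  have hsin := abs_sin_mul_inner_div_two_le ε h η
  rw [abs_of_nonneg hε] at hsin
  have hCφ : 0 ≤ Cφ := (abs_nonneg _).trans (hφ 0)
  have hM0 : 0 ≤ M := (by positivity : (0 : ℝ) ≤ _).trans (hM 0 0)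
  calc ‖Sintegrand φhat fhat t₁ ε ξ η h‖
      = |φhat (ε • h)| * |Real.sin (ε * inner ℝ h η / 2)| * A * B := by
        simp only [Sintegrand, norm_mul, Complex.norm_real, Real.norm_eq_abs, A, B]
    _ ≤ Cφ * (ε * ‖h‖ * ‖η‖ / 2) * A * B := by gcongr; exact hφ _
    _ = ε / 2 * Cφ * (‖η‖ * A) * (‖h‖ * B) := by ring
    _ ≤ ε / 2 * Cφ * (max 1 |t₁| * M) * G h := by gcongr
    _ = ε / 2 * (Cφ * max 1 |t₁| * M) * G h := by ring

theorem norm_Sterm_le (hφ : ∀ h, |φhat h| ≤ Cφ)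
    (hM : ∀ ξ η : Space3, (‖ξ‖ + ‖η‖) * ‖fhat (ξ, η)‖ ≤ M)
    (hG : ∀ ξ η : Space3, (‖ξ‖ + ‖η‖) * ‖fhat (ξ, η)‖ ≤ G ξ)
    (hGint : Integrable G) {ε : ℝ} (hε : 0 < ε) (ξ η : Space3) :
    ‖Sterm φhat fhat t₁ ε ξ η‖ ≤
      Cφ * max 1 |t₁| / (2 * π) ^ 3 * Real.sqrt ε * M * ∫ x, G x := by
  have hint : ‖∫ h, Sintegrand φhat fhat t₁ ε ξ η h‖ ≤
      ε / 2 * (Cφ * max 1 |t₁| * M) * ∫ x, G x := by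
    rw [← integral_const_mul]
    exact norm_integral_le_of_norm_le (hGint.const_mul _)
      (Eventually.of_forall (norm_Sintegrand_le hφ hM hG hε.le ξ η))
  have hsqrt : 0 < Real.sqrt ε := Real.sqrt_pos.mpr hε
  rw [Sterm_eq_smul_integral_Sintegrand, norm_smul, Real.norm_eq_abs, abs_div, abs_neg,
    abs_of_pos (by positivity : (0 : ℝ) < 2 / Real.sqrt ε),
    abs_of_pos (by positivity : (0 : ℝ) < (2 * π) ^ 3)]
  calc 2 / Real.sqrt ε / (2 * π) ^ 3 * ‖∫ h, Sintegrand φhat fhat t₁ ε ξ η h‖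
      ≤ 2 / Real.sqrt ε / (2 * π) ^ 3 * (ε / 2 * (Cφ * max 1 |t₁| * M) * ∫ x, G x) := by
        gcongr
    _ = ε / Real.sqrt ε * (Cφ * max 1 |t₁| / (2 * π) ^ 3 * M * ∫ x, G x) := by ring
    _ = Cφ * max 1 |t₁| / (2 * π) ^ 3 * Real.sqrt ε * M * ∫ x, G x := by
        rw [Real.div_sqrt]; ring

end Bounds

theorem Sterm_vanishes_general (φhat : Space3 → ℝ) (Cφ : ℝ) (hφ : ∀ h, |φhat h| ≤ Cφ)
    (fhat : Space3 × Space3 → ℂ) (t₁ : ℝ)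
    (M : ℝ) (hM : ∀ ξ η : Space3, (‖ξ‖ + ‖η‖) * ‖fhat (ξ, η)‖ ≤ M)
    (G : Space3 → ℝ) (hG : ∀ ξ η : Space3, (‖ξ‖ + ‖η‖) * ‖fhat (ξ, η)‖ ≤ G ξ)
    (hGint : Integrable G) :
    (∃ C : ℝ, 0 < C ∧ ∀ ε ∈ Set.Ioc (0 : ℝ) 1, ∀ ξ η : Space3,
        ‖Sterm φhat fhat t₁ ε ξ η‖ ≤ C * Real.sqrt ε * M * ∫ x, G x) ∧
    ∀ ξ η : Space3,
      Tendsto (fun ε : ℝ => Sterm φhat fhat t₁ ε ξ η)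
        (nhdsWithin 0 (Set.Ioi 0)) (nhds 0) := by
  set K := Cφ * max 1 |t₁| / (2 * π) ^ 3
  have hK : 0 ≤ K := by
    have := (abs_nonneg _).trans (hφ 0)
    have : (0 : ℝ) ≤ max 1 |t₁| := zero_le_one.trans (le_max_left _ _)
    positivity
  have hMG : 0 ≤ M * ∫ x, G x :=
    mul_nonneg ((by positivity : (0 : ℝ) ≤ _).trans (hM 0 0))
      (integral_nonneg fun x ↦ (by positivity : (0 : ℝ) ≤ _).trans (hG x x))
  refine ⟨⟨K + 1, by positivity, fun ε hε ξ η ↦ ?_⟩, fun ξ η ↦ ?_⟩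
  · refine (norm_Sterm_le hφ hM hG hGint hε.1 ξ η).trans ?_
    simp only [mul_assoc]
    gcongr
    linarith
  · have hsqrt : Tendsto (fun ε ↦ K * Real.sqrt ε * M * ∫ x, G x) (nhdsWithin 0 (Set.Ioi 0))
        (nhds 0) := by
      have := ((Real.continuous_sqrt.tendsto 0).const_mul K).mul_const M |>.mul_const (∫ x, G x)
      simpa using this.mono_left nhdsWithin_le_nhds
    exact squeeze_zero_norm' (eventually_nhdsWithin_of_forall fun ε hε ↦
      norm_Sterm_le hφ hM hG hGint hε ξ η) hsqrt

/-- The term `Ŝ^{(1,2)}_{2,ε}` is bounded by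
`C √ε · sup_{ξ,η}((|ξ|+|η|)|f̂₀|) · ∫ dξ sup_η((|ξ|+|η|)|f̂₀|)` with `C` depending
only on `‖φ̂‖_∞` and `t₁`; in particular it tends to `0` as `ε → 0⁺`, pointwise in
`(ξ,η)`. -/
theorem Sterm_vanishes (φhat : Space3 → ℝ) (Cφ : ℝ) (hφ : ∀ h, |φhat h| ≤ Cφ)
    (fhat : Space3 × Space3 → ℂ) (t₁ : ℝ) (ht₁ : 0 < t₁)
    (M : ℝ) (hM : ∀ ξ η : Space3, (‖ξ‖ + ‖η‖) * ‖fhat (ξ, η)‖ ≤ M)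
    (G : Space3 → ℝ) (hG : ∀ ξ η : Space3, (‖ξ‖ + ‖η‖) * ‖fhat (ξ, η)‖ ≤ G ξ)
    (hGint : Integrable G)
    (hint : ∀ ε : ℝ, 0 < ε → ∀ ξ η : Space3,
      Integrable (fun h : Space3 =>
        (φhat (ε • h) : ℂ) * (Real.sin (ε * (inner ℝ h η : ℝ) / 2) : ℝ) *
          fhat (ξ - h, η + t₁ • (ξ - h)) * fhat (h, t₁ • h))) :
    (∃ C : ℝ, 0 < C ∧ ∀ ε ∈ Set.Ioc (0 : ℝ) 1, ∀ ξ η : Space3,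
        ‖Sterm φhat fhat t₁ ε ξ η‖ ≤ C * Real.sqrt ε * M * ∫ x, G x) ∧
    ∀ ξ η : Space3,
      Tendsto (fun ε : ℝ => Sterm φhat fhat t₁ ε ξ η)
        (nhdsWithin 0 (Set.Ioi 0)) (nhds 0) :=
  Sterm_vanishes_general φhat Cφ hφ fhat t₁ M hM G hG hGint

end
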